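/- Let Δ denote the Dirichlet Laplacian acting in the first variable of a kernel, i.e. (ΔG)[n,m] = 2·G[n,m] − G[n+1,m] − G[n−1,m] for n ≥ 1, with the convention G[0,m] := 0. Then for all n, m ≥ 1: (ΔG₀)[n,m] equals 1 if n = m and 0 otherwise; (ΔG₁)[n,m] = 0; (ΔG₂)[n,m] = −G₀[n,m]; and (ΔG₃)[n,m] = −G₁[n,m]. -/
import Mathlib


noncomputable section

/-- The kernel G₀[n,m] = min(n,m). -/
def g0 (n m : ℕ) : ℝ := ((min n m : ℕ) : ℝ)

/-- The kernel G₁[n,m] = −n·m. -/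
def g1 (n m : ℕ) : ℝ := -((n : ℝ) * (m : ℝ))

/-- The kernel G₂[n,m] = −(1/6)·min(n,m) + (1/6)·min(n,m)³ + (1/2)·n·m·max(n,m). -/
def g2 (n m : ℕ) : ℝ :=
  -(1/6) * ((min n m : ℕ) : ℝ) + (1/6) * ((min n m : ℕ) : ℝ)^3
    + (1/2) * (n : ℝ) * (m : ℝ) * ((max n m : ℕ) : ℝ)

/-- The kernel G₃[n,m] = (5/24)·n·m − (1/6)·n³·m − (1/6)·n·m³. -/
def g3 (n m : ℕ) : ℝ :=
  (5/24) * (n : ℝ) * (m : ℝ) - (1/6) * (n : ℝ)^3 * (m : ℝ) - (1/6) * (n : ℝ) * (m : ℝ)^3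

/-- The Dirichlet Laplacian acting in the first variable of a kernel, with the
convention G[0,m] := 0 :  (ΔG)[n,m] = 2·G[n,m] − G[n+1,m] − G[n−1,m]. -/
def lap (G : ℕ → ℕ → ℝ) (n m : ℕ) : ℝ :=
  2 * G n m - G (n + 1) m - (if n = 1 then 0 else G (n - 1) m)

lemma lap_eq (G : ℕ → ℕ → ℝ) (n m : ℕ) (h0 : G 0 m = 0) :
    lap G n m = 2 * G n m - G (n + 1) m - G (n - 1) m := by
  unfold lap
  by_cases h : n = 1 <;> simp [h, h0]

theorem lap_of_kernels :
    ∀ n m : ℕ, 1 ≤ n → 1 ≤ m →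
      (lap g0 n m = if n = m then 1 else 0) ∧
      lap g1 n m = 0 ∧
      lap g2 n m = -g0 n m ∧
      lap g3 n m = -g1 n m := by
  intro n m hn hm
  obtain ⟨k, rfl⟩ : ∃ k, n = k + 1 := ⟨n - 1, by omega⟩
  rw [lap_eq g0 _ m (by simp [g0]), lap_eq g1 _ m (by simp [g1]),
    lap_eq g2 _ m (by simp [g2]), lap_eq g3 _ m (by simp [g3])]
  simp only [g0, g1, g2, g3, Nat.add_sub_cancel]
  rcases lt_trichotomy (k + 1) m with h | h | h
  · have h1 : min (k + 1) m = k + 1 := by omega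
    have h2 : min (k + 1 + 1) m = k + 1 + 1 := by omega
    have h3 : min k m = k := by omega
    have h4 : max (k + 1) m = m := by omega
    have h5 : max (k + 1 + 1) m = m := by omega
    have h6 : max k m = m := by omega
    have hne : k + 1 ≠ m := by omega
    simp only [h1, h2, h3, h4, h5, h6, hne, if_false]
    refine ⟨?_, ?_, ?_, ?_⟩ <;> push_cast <;> ring
  · subst h
    have h1 : min (k + 1) (k + 1) = k + 1 := by omega
    have h2 : min (k + 1 + 1) (k + 1) = k + 1 := by omega
    have h3 : min k (k + 1) = k := by omega
    have h4 : max (k + 1) (k + 1) = k + 1 := by omega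
    have h5 : max (k + 1 + 1) (k + 1) = k + 1 + 1 := by omega
    have h6 : max k (k + 1) = k + 1 := by omega
    simp only [h1, h2, h3, h4, h5, h6, if_pos rfl]
    refine ⟨?_, ?_, ?_, ?_⟩ <;> push_cast <;> ring
  · have h1 : min (k + 1) m = m := by omega
    have h2 : min (k + 1 + 1) m = m := by omega
    have h3 : min k m = m := by omega
    have h4 : max (k + 1) m = k + 1 := by omega
    have h5 : max (k + 1 + 1) m = k + 1 + 1 := by omega
    have h6 : max k m = k := by omega
    have hne : k + 1 ≠ m := by omega
    simp only [h1, h2, h3, h4, h5, h6, hne, if_false]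
    refine ⟨?_, ?_, ?_, ?_⟩ <;> push_cast <;> ring
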